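/- If G is a connected graph with n(G) ≥ 2 and k ≥ 2, then dim_ms(G ∘ \overline{K_k}) ≥ n(G)(k−1), where G ∘ \overline{K_k} is the lexicographic product of G with the edgeless graph on k vertices. -/

import Mathlib

open SimpleGraph

/-- The multiset representation of `u` with respect to `S`: the multiset of
distances from `u` to the vertices of `S`, counted with multiplicity. -/
noncomputable def mrep {V : Type*} (G : SimpleGraph V) (u : V) (S : Finset V) : Multiset ℕ :=
  S.val.map fun w => G.dist u w

/-- `S` is an outer multiset resolving set of `G`: the multiset representations of
the vertices outside `S` are pairwise distinct. -/
def IsOMR {V : Type*} (G : SimpleGraph V) (S : Finset V) : Prop :=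
  ∀ u ∉ S, ∀ v ∉ S, mrep G u S = mrep G v S → u = v

/-- The outer multiset dimension of `G`. -/
noncomputable def dimMS {V : Type*} (G : SimpleGraph V) [Fintype V] : ℕ :=
  sInf {n | ∃ S : Finset V, S.card = n ∧ IsOMR G S}

/-- The diameter of `G`: the largest distance between vertices of `G`. -/
noncomputable def gdiam {V : Type*} (G : SimpleGraph V) [Fintype V] : ℕ :=
  Finset.univ.sup fun p : V × V => G.dist p.1 p.2

/-- The lexicographic product of two simple graphs: `(g, h)` and `(gʹ, hʹ)` are adjacent
iff `g gʹ` is an edge of `G`, or `g = gʹ` and `h hʹ` is an edge of `H`. -/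
def lexProd {α β : Type*} (G : SimpleGraph α) (H : SimpleGraph β) : SimpleGraph (α × β) where
  Adj p q := G.Adj p.1 q.1 ∨ (p.1 = q.1 ∧ H.Adj p.2 q.2)
  symm := by
    constructor
    intro p q h
    rcases h with h | ⟨h1, h2⟩
    · exact Or.inl h.symm
    · exact Or.inr ⟨h1.symm, h2.symm⟩
  loopless := by
    constructor
    intro p h
    rcases h with h | ⟨_, h2⟩
    · exact G.loopless.irrefl _ h
    · exact H.loopless.irrefl _ h2

/-!
Two vertices of `lexProd G ⊥` with the same first coordinate have the same neighbourhood, and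
vertices `u ≠ v` with the same neighbourhood are at the same distance from every third vertex
(a shortest walk leaving `u` can leave `v` instead). Hence they have the same multiset
representation with respect to any `S` avoiding both, so an outer multiset resolving set misses
at most one vertex of each of the `n(G)` fibres `{g} × Fin k`.
-/

namespace SimpleGraph

variable {V : Type*} {G : SimpleGraph V} {u v w : V}

lemma Walk.exists_length_eq_of_neighborSet_subset (h : G.neighborSet u ⊆ G.neighborSet v)
    (p : G.Walk u w) (hw : w ≠ u) : ∃ q : G.Walk v w, q.length = p.length := by
  cases p with
  | nil => exact absurd rfl hw
  | cons hadj p => exact ⟨.cons (h hadj) p, rfl⟩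

lemma Reachable.of_neighborSet_subset (h : G.neighborSet u ⊆ G.neighborSet v)
    (hr : G.Reachable u w) (hw : w ≠ u) : G.Reachable v w := by
  obtain ⟨p⟩ := hr
  obtain ⟨q, -⟩ := p.exists_length_eq_of_neighborSet_subset h hw
  exact ⟨q⟩

lemma dist_le_dist_of_neighborSet_subset (h : G.neighborSet u ⊆ G.neighborSet v)
    (hr : G.Reachable u w) (hw : w ≠ u) : G.dist v w ≤ G.dist u w := by
  obtain ⟨p, hp⟩ := hr.exists_walk_length_eq_dist
  obtain ⟨q, hq⟩ := p.exists_length_eq_of_neighborSet_subset h hw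
  exact hp ▸ hq ▸ dist_le q

lemma dist_eq_dist_of_neighborSet_eq (h : G.neighborSet u = G.neighborSet v)
    (hwu : w ≠ u) (hwv : w ≠ v) : G.dist u w = G.dist v w := by
  by_cases hr : G.Reachable u w
  · exact le_antisymm
      (dist_le_dist_of_neighborSet_subset h.ge (hr.of_neighborSet_subset h.le hwu) hwv)
      (dist_le_dist_of_neighborSet_subset h.le hr hwu)
  · have hr' : ¬G.Reachable v w := fun hv => hr (hv.of_neighborSet_subset h.ge hwv)
    rw [dist_eq_zero_of_not_reachable hr, dist_eq_zero_of_not_reachable hr']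

end SimpleGraph

section OuterMultisetResolving

variable {V : Type*} {G : SimpleGraph V} {S : Finset V} {u v : V}

lemma mrep_eq_of_neighborSet_eq (h : G.neighborSet u = G.neighborSet v)
    (hu : u ∉ S) (hv : v ∉ S) : mrep G u S = mrep G v S :=
  Multiset.map_congr rfl fun _ hw =>
    dist_eq_dist_of_neighborSet_eq h (fun hwu => hu (hwu ▸ hw)) (fun hwv => hv (hwv ▸ hw))

lemma IsOMR.eq_of_neighborSet_eq (hS : IsOMR G S) (h : G.neighborSet u = G.neighborSet v)
    (hu : u ∉ S) (hv : v ∉ S) : u = v :=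
  hS u hu v hv (mrep_eq_of_neighborSet_eq h hu hv)

lemma IsOMR.card_compl_le [Fintype V] [DecidableEq V] {α : Type*} [Fintype α] (hS : IsOMR G S)
    (f : V → α) (hf : ∀ u v, f u = f v → G.neighborSet u = G.neighborSet v) :
    Sᶜ.card ≤ Fintype.card α :=
  Finset.card_le_card_of_injOn f (fun _ _ => Finset.mem_coe.2 (Finset.mem_univ _))
    fun u hu v hv huv =>
      hS.eq_of_neighborSet_eq (hf u v huv) (Finset.mem_compl.1 hu) (Finset.mem_compl.1 hv)

lemma le_dimMS [Fintype V] {n : ℕ} (h : ∀ S, IsOMR G S → n ≤ S.card) : n ≤ dimMS G :=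
  le_csInf ⟨_, Finset.univ, rfl, fun u hu => absurd (Finset.mem_univ u) hu⟩
    fun _ ⟨S, hS, hOMR⟩ => hS ▸ h S hOMR

end OuterMultisetResolving

lemma lexProd_bot_neighborSet_eq {α β : Type*} (G : SimpleGraph α) {p q : α × β}
    (h : p.1 = q.1) :
    (lexProd G (⊥ : SimpleGraph β)).neighborSet p = (lexProd G ⊥).neighborSet q := by
  ext r
  simp [lexProd, h]

theorem stmt_12_general (V : Type*) [Fintype V] (G : SimpleGraph V) (k : ℕ) :
    Fintype.card V * (k - 1) ≤ dimMS (lexProd G (⊥ : SimpleGraph (Fin k))) := by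
  classical
  refine le_dimMS fun S hS => ?_
  have hcompl : Sᶜ.card ≤ Fintype.card V :=
    hS.card_compl_le Prod.fst fun _ _ => lexProd_bot_neighborSet_eq G
  rw [Finset.card_compl, Fintype.card_prod, Fintype.card_fin] at hcompl
  rw [Nat.mul_sub_one]
  omega

theorem stmt_12 (V : Type*) [Fintype V] (G : SimpleGraph V)
    (hconn : G.Connected) (hn : 2 ≤ Fintype.card V) (k : ℕ) (hk : 2 ≤ k) :
    Fintype.card V * (k - 1) ≤ dimMS (lexProd G (⊥ : SimpleGraph (Fin k))) :=
  stmt_12_general V G k
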